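/- If ε_1 < ε_2 < ⋯ < ε_{l+1} are elements of T = {0,1}^n and d = |{δ(ε_i, ε_{i+1}) : 1 ≤ i ≤ l}| is the number of distinct consecutive δ-values, then 2^d ≥ l+1; in particular d ≥ log₂(l+1). -/
import Mathlib


/-- `b(ε) = Σ_i ε_i · 2^i`, the number whose binary digits are given by `ε`. -/
def bval {n : ℕ} (ε : Fin n → Bool) : ℕ :=
  ∑ i, if ε i then 2 ^ (i : ℕ) else 0

/-- `δ(ε, ε')`: the largest coordinate at which `ε` and `ε'` differ. -/
def delta {n : ℕ} (ε ε' : Fin n → Bool) : ℕ :=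
  (Finset.univ.filter fun i => ε i ≠ ε' i).sup Fin.val

/-- `D`, the set of consecutive values `{δ(ε_i, ε_{i+1}) : 1 ≤ i ≤ l}` of a
chain `ε₁ < ⋯ < ε_{l+1}`. -/
def Dset {n l : ℕ} (ε : Fin (l + 1) → Fin n → Bool) : Finset ℕ :=
  Finset.univ.image fun i : Fin l => delta (ε i.castSucc) (ε i.succ)


lemma sum_range_two_pow (k : ℕ) : ∑ j ∈ Finset.range k, 2 ^ j = 2 ^ k - 1 := by
  induction k with
  | zero => simp
  | succ k ih => rw [Finset.sum_range_succ, ih]; have := Nat.one_le_two_pow (n := k); omega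

lemma bval_lt_bval {n : ℕ} {ε ε' : Fin n → Bool} (d : Fin n) (h1 : ε d = false)
    (h2 : ε' d = true) (h3 : ∀ i, d < i → ε i = ε' i) : bval ε < bval ε' := by
  classical
  unfold bval
  rw [← Finset.sum_filter_add_sum_filter_not Finset.univ (fun i => d < i),
      ← Finset.sum_filter_add_sum_filter_not Finset.univ (fun i => d < i)
        (fun i => if ε' i then 2 ^ (i : ℕ) else 0)]
  have hhigh : ∑ i ∈ Finset.univ.filter (fun i => d < i), (if ε i then 2 ^ (i : ℕ) else 0)
      = ∑ i ∈ Finset.univ.filter (fun i => d < i), (if ε' i then 2 ^ (i : ℕ) else 0) := by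
    refine Finset.sum_congr rfl fun i hi => ?_
    rw [h3 i (Finset.mem_filter.mp hi).2]
  rw [hhigh]
  have hd : d ∈ Finset.univ.filter (fun i => ¬ d < i) := by simp
  refine Nat.add_lt_add_left (lt_of_lt_of_le (b := 2 ^ (d:ℕ)) ?_ ?_) _
  · have hset : Finset.univ.filter (fun i : Fin n => ¬ d < i)
        = insert d (Finset.univ.filter (fun i : Fin n => i < d)) := by
      ext i
      simp only [Finset.mem_insert, Finset.mem_filter, Finset.mem_univ, true_and, not_lt,
        Fin.le_def, Fin.lt_def, Fin.ext_iff]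
      omega
    rw [hset, Finset.sum_insert (by simp), h1]
    simp only [Bool.false_eq_true, if_false, zero_add]
    calc ∑ i ∈ Finset.univ.filter (fun i : Fin n => i < d), (if ε i then 2 ^ (i : ℕ) else 0)
        ≤ ∑ i ∈ Finset.univ.filter (fun i : Fin n => i < d), 2 ^ (i : ℕ) :=
          Finset.sum_le_sum fun i _ => by split <;> simp
      _ = ∑ j ∈ Finset.range (d : ℕ), 2 ^ j := by
          rw [Finset.sum_filter]
          simp only [Fin.lt_def]
          rw [Fin.sum_univ_eq_sum_range (fun j => if j < (d:ℕ) then 2 ^ j else 0) n,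
            ← Finset.sum_filter]
          congr 1
          ext j
          have := d.isLt
          simp only [Finset.mem_filter, Finset.mem_range]
          omega
      _ < 2 ^ (d : ℕ) := by
          rw [sum_range_two_pow]; have := Nat.one_le_two_pow (n := (d:ℕ)); omega
  · exact le_trans (by simp [h2]) (Finset.single_le_sum
      (f := fun i => if ε' i then 2 ^ (i : ℕ) else 0) (fun i _ => Nat.zero_le _) hd)

/-- delta is determined by a witness coordinate above which the functions agree. -/
lemma delta_eq_of {n : ℕ} {ε ε' : Fin n → Bool} (d : Fin n) (hne : ε d ≠ ε' d)
    (hab : ∀ i, d < i → ε i = ε' i) : delta ε ε' = (d : ℕ) := by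
  classical
  unfold delta
  apply le_antisymm
  · refine Finset.sup_le fun i hi => ?_
    simp only [Finset.mem_filter, Finset.mem_univ, true_and] at hi
    by_contra h
    exact hi (hab i (Fin.lt_def.mpr (by omega)))
  · exact Finset.le_sup (by simp [hne])

lemma exists_delta {n : ℕ} {ε ε' : Fin n → Bool} (h : bval ε < bval ε') :
    ∃ d : Fin n, (d : ℕ) = delta ε ε' ∧ ε d = false ∧ ε' d = true ∧
      ∀ i, d < i → ε i = ε' i := by
  classical
  have hne : ε ≠ ε' := fun he => by subst he; exact lt_irrefl _ h
  have hS : (Finset.univ.filter fun i => ε i ≠ ε' i).Nonempty := by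
    rw [Finset.filter_nonempty_iff]
    by_contra hcon
    push_neg at hcon
    exact hne (funext fun i => by have := hcon i (Finset.mem_univ i); tauto)
  obtain ⟨d, hd, hsup⟩ := Finset.exists_mem_eq_sup _ hS Fin.val
  simp only [Finset.mem_filter, Finset.mem_univ, true_and] at hd
  have hab : ∀ i, d < i → ε i = ε' i := by
    intro i hi
    by_contra hc
    have h2 : (i : ℕ) ≤ (Finset.univ.filter fun k => ε k ≠ ε' k).sup Fin.val :=
      Finset.le_sup (by simp [hc])
    rw [hsup] at h2
    have := Fin.lt_def.mp hi
    omega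
  refine ⟨d, ?_, ?_, ?_, hab⟩
  · rw [delta, hsup]
  · cases he : ε d with
    | false => rfl
    | true =>
      exfalso
      have he' : ε' d = false := by cases h' : ε' d <;> simp_all
      exact absurd (bval_lt_bval d he' he fun i hi => (hab i hi).symm) (by omega)
  · cases he : ε d with
    | true =>
      exfalso
      have he' : ε' d = false := by cases h' : ε' d <;> simp_all
      exact absurd (bval_lt_bval d he' he fun i hi => (hab i hi).symm) (by omega)
    | false => cases h' : ε' d <;> simp_all

/-- ultrametric equality for a chain of three. -/
lemma delta_trans {n : ℕ} {a b c : Fin n → Bool} (hab : bval a < bval b)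
    (hbc : bval b < bval c) :
    delta a c = max (delta a b) (delta b c) := by
  obtain ⟨i, hi, hai, hbi, habove⟩ := exists_delta hab
  obtain ⟨j, hj, hbj, hcj, hbove⟩ := exists_delta hbc
  have hij : i ≠ j := fun h => by subst h; rw [hbi] at hbj; exact Bool.noConfusion hbj
  rcases lt_or_gt_of_ne hij with h | h
  · -- i < j : top bit is j
    have : delta a c = (j : ℕ) := by
      refine delta_eq_of j ?_ ?_
      · rw [habove j h, hbj, hcj]; simp
      · intro k hk; rw [habove k (h.trans hk), hbove k hk]
    rw [this, ← hi, ← hj, max_eq_right (le_of_lt (by exact_mod_cast h))]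
  · -- j < i : top bit is i
    have : delta a c = (i : ℕ) := by
      refine delta_eq_of i ?_ ?_
      · rw [hai, ← hbove i h, hbi]; simp
      · intro k hk; rw [habove k hk, hbove k (h.trans hk)]
    rw [this, ← hi, ← hj, max_eq_left (le_of_lt (by exact_mod_cast h))]

lemma delta_mem_Dset {n l : ℕ} (ε : Fin (l + 1) → Fin n → Bool)
    (hε : ∀ i j : Fin (l + 1), i < j → bval (ε i) < bval (ε j))
    (i j : Fin (l + 1)) (hij : i < j) : delta (ε i) (ε j) ∈ Dset ε := by
  obtain ⟨jv, hjv⟩ := j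
  induction jv with
  | zero => exact absurd hij (by simp [Fin.lt_def])
  | succ k ih =>
    have hk : k < l := by omega
    have hkl : k < l + 1 := by omega
    set m : Fin l := ⟨k, hk⟩ with hm
    have hmc : (m.castSucc : Fin (l + 1)) = ⟨k, hkl⟩ := rfl
    have hms : (m.succ : Fin (l + 1)) = ⟨k + 1, hjv⟩ := rfl
    have hcons : delta (ε ⟨k, hkl⟩) (ε ⟨k + 1, hjv⟩) ∈ Dset ε := by
      rw [← hmc, ← hms]
      exact Finset.mem_image_of_mem _ (Finset.mem_univ m)
    rcases lt_or_eq_of_le (Nat.lt_succ_iff.mp (Fin.lt_def.mp hij)) with h | h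
    · -- i < k, use transitivity
      have h1 : (i : Fin (l+1)) < ⟨k, hkl⟩ := Fin.lt_def.mpr h
      have h2 : (⟨k, hkl⟩ : Fin (l+1)) < ⟨k + 1, hjv⟩ := Fin.lt_def.mpr (Nat.lt_succ_self k)
      rw [delta_trans (hε i ⟨k, hkl⟩ h1) (hε ⟨k, hkl⟩ ⟨k + 1, hjv⟩ h2)]
      rcases max_choice (delta (ε i) (ε ⟨k, hkl⟩)) (delta (ε ⟨k, hkl⟩) (ε ⟨k + 1, hjv⟩)) with
        hmax | hmax <;> rw [hmax]
      · exact ih hkl h1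
      · exact hcons
    · -- i = k : consecutive
      have : i = ⟨k, hkl⟩ := Fin.ext h
      rw [this]
      exact hcons

/-- If `ε₁ < ⋯ < ε_{l+1}` is a chain in `T = {0,1}ⁿ` and `d` is the number of
distinct consecutive `δ`-values, then `2 ^ d ≥ l + 1`; in particular
`d ≥ log₂ (l + 1)`. -/
theorem card_Dset_lower_bound {n l : ℕ} (ε : Fin (l + 1) → Fin n → Bool)
    (hε : ∀ i j : Fin (l + 1), i < j → bval (ε i) < bval (ε j)) :
    l + 1 ≤ 2 ^ (Dset ε).card ∧
      Real.logb 2 (l + 1) ≤ ((Dset ε).card : ℝ) := by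
  classical
  have key : l + 1 ≤ 2 ^ (Dset ε).card := by
    have hinj : Function.Injective
        (fun (i : Fin (l + 1)) (d : {x // x ∈ Dset ε}) =>
          if h : (d : ℕ) < n then ε i ⟨d, h⟩ else false) := by
      intro i j hEq
      by_contra hne
      wlog hij : i < j generalizing i j
      · exact this hEq.symm (Ne.symm hne) (lt_of_le_of_ne (not_lt.mp hij) (Ne.symm hne))
      obtain ⟨d, hd, hdf, hdt, _⟩ := exists_delta (hε i j hij)
      have hmem : delta (ε i) (ε j) ∈ Dset ε := delta_mem_Dset ε hε i j hij
      have hmem' : (d : ℕ) ∈ Dset ε := hd ▸ hmem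
      have hthis := congrFun hEq ⟨(d : ℕ), hmem'⟩
      simp only [dif_pos d.isLt, Fin.eta, hdf, hdt] at hthis
      exact Bool.noConfusion hthis
    calc l + 1 = Fintype.card (Fin (l + 1)) := (Fintype.card_fin _).symm
      _ ≤ Fintype.card ({x // x ∈ Dset ε} → Bool) := Fintype.card_le_of_injective _ hinj
      _ = 2 ^ (Dset ε).card := by
          rw [Fintype.card_fun, Fintype.card_bool, Fintype.card_coe]
  refine ⟨key, ?_⟩
  have h1 : ((l : ℝ) + 1) ≤ (2 : ℝ) ^ (Dset ε).card := by exact_mod_cast key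
  calc Real.logb 2 (l + 1) ≤ Real.logb 2 ((2 : ℝ) ^ (Dset ε).card) :=
        Real.logb_le_logb_of_le (by norm_num) (by positivity) (by push_cast; linarith)
    _ = (Dset ε).card := by
        rw [Real.logb_pow, Real.logb_self_eq_one (by norm_num), mul_one]
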